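/- arXiv:1901.04280 — 2 statements merged into one kernel-verified Lean document; each statement's English description precedes it below -/
import Mathlib

section
/- Let α > 2, let Ψ ≥ 1 be an integer, and let a > 0 and r₀ > 0 be real numbers, and set t₀ = 1/(1 + a r₀^{−α}). Then ∫_{r₀}^∞ (1 − (1 + a r^{−α})^{−Ψ}) · r dr = (a^{2/α}/α) · ∑_{i=1}^{Ψ} C(Ψ, i) · ∫_{t₀}^{1} t^{Ψ − i + 2/α − 1} (1 − t)^{i − 2/α − 1} dt, where C(Ψ, i) denotes the binomial coefficient; in particular, all integrals appearing are finite. -/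
open MeasureTheory Real Set

/-!
The substitution `r = (a t / (1 - t)) ^ (1 / α)`, inverse to `t = (1 + a r ^ (-α))⁻¹`,
maps `(t₀, 1)` onto `(r₀, ∞)`, turns `1 - (1 + a r ^ (-α)) ^ (-Ψ)` into `1 - t ^ Ψ` and
`r dr` into `(a ^ (2 / α) / α) t ^ (2 / α - 1) (1 - t) ^ (-2 / α - 1) dt`. Expanding
`1 - t ^ Ψ = ∑_{i ≥ 1} C(Ψ, i) (1 - t) ^ i t ^ (Ψ - i)` produces the Beta integrands,
which are integrable near `t = 1` because `i - 2 / α - 1 > -1`.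
-/

theorem one_sub_pow_eq_sum_Icc_choose {R : Type*} [CommRing R] (t : R) (n : ℕ) :
    1 - t ^ n = ∑ i ∈ Finset.Icc 1 n, (1 - t) ^ i * t ^ (n - i) * n.choose i := by
  have h := add_pow (1 - t) t n
  rw [sub_add_cancel, one_pow, Finset.range_eq_Ico,
    Finset.sum_eq_sum_Ico_succ_bot (by omega)] at h
  simp only [pow_zero, one_mul, Nat.sub_zero, Nat.choose_zero_right, Nat.cast_one, mul_one] at h
  rw [zero_add, Finset.Ico_add_one_right_eq_Icc] at h
  linear_combination h

theorem one_sub_pow_mul_rpow_mul_rpow_eq_sum {t : ℝ} (ht₀ : 0 < t) (ht₁ : t < 1) (n : ℕ)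
    (p : ℝ) :
    (1 - t ^ n) * (t ^ (p - 1) * (1 - t) ^ (-p - 1)) =
      ∑ i ∈ Finset.Icc 1 n, (n.choose i : ℝ) *
        (t ^ ((n : ℝ) - i + p - 1) * (1 - t) ^ ((i : ℝ) - p - 1)) := by
  have h1t : 0 < 1 - t := by linarith
  rw [one_sub_pow_eq_sum_Icc_choose, Finset.sum_mul]
  refine Finset.sum_congr rfl fun i hi => ?_
  have hin : i ≤ n := (Finset.mem_Icc.mp hi).2
  rw [show (n : ℝ) - i + p - 1 = ((n - i : ℕ) : ℝ) + (p - 1) by push_cast [hin]; ring,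
    show (i : ℝ) - p - 1 = (i : ℝ) + (-p - 1) by ring, rpow_add ht₀, rpow_add h1t,
    rpow_natCast, rpow_natCast]
  ring

theorem integrableOn_rpow_mul_one_sub_rpow_Ioo {t₀ p q : ℝ} (ht₀ : 0 < t₀) (hq : -1 < q) :
    IntegrableOn (fun t : ℝ => t ^ p * (1 - t) ^ q) (Ioo t₀ 1) := by
  have hsing : IntegrableOn (fun t : ℝ => (1 - t) ^ q) (Ioo t₀ 1) := by
    have h :=
      (intervalIntegral.intervalIntegrable_rpow' (a := 1 - t₀) (b := 0) hq).comp_sub_left 1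
    simp only [sub_sub_cancel, sub_zero] at h
    exact h.1.mono_set Ioo_subset_Ioc_self
  refine hsing.continuousOn_mul_of_subset ?_ isCompact_Icc measurableSet_Ioo Ioo_subset_Icc_self
  exact continuousOn_id.rpow_const fun t ht => Or.inl (ht₀.trans_le ht.1).ne'

noncomputable def betaVar (a α r : ℝ) : ℝ := (1 + a * r ^ (-α))⁻¹

noncomputable def betaVarInv (a α t : ℝ) : ℝ := (a * (t / (1 - t))) ^ α⁻¹

section BetaSubstitution

variable {a α : ℝ}

theorem betaVar_pos (ha : 0 < a) {r : ℝ} (hr : 0 < r) : 0 < betaVar a α r := by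
  unfold betaVar; positivity

theorem betaVar_lt_one (ha : 0 < a) {r : ℝ} (hr : 0 < r) : betaVar a α r < 1 :=
  inv_lt_one_of_one_lt₀ (lt_add_of_pos_right 1 (by positivity))

theorem betaVar_strictMonoOn (ha : 0 < a) (hα : 0 < α) :
    StrictMonoOn (betaVar a α) (Ioi 0) := by
  intro r (hr : 0 < r) s (hs : 0 < s) hrs
  have hpow : s ^ (-α) < r ^ (-α) := rpow_lt_rpow_of_neg hr hrs (neg_neg_of_pos hα)
  exact inv_strictAnti₀ (by positivity) (add_lt_add_right (mul_lt_mul_of_pos_left hpow ha) 1)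

theorem betaVarInv_pos (ha : 0 < a) {t : ℝ} (ht₀ : 0 < t) (ht₁ : t < 1) :
    0 < betaVarInv a α t := by
  unfold betaVarInv
  have : 0 < 1 - t := by linarith
  positivity

theorem betaVarInv_betaVar (ha : 0 < a) (hα : α ≠ 0) {r : ℝ} (hr : 0 < r) :
    betaVarInv a α (betaVar a α r) = r := by
  have hx : 0 < a * r ^ (-α) := by positivity
  have h : a * (betaVar a α r / (1 - betaVar a α r)) = r ^ α := by
    rw [betaVar, rpow_neg hr.le] at *
    field_simp [ha.ne']
    ring
  rw [betaVarInv, h, rpow_rpow_inv hr.le hα]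

theorem betaVar_betaVarInv (ha : 0 < a) (hα : α ≠ 0) {t : ℝ} (ht₀ : 0 < t) (ht₁ : t < 1) :
    betaVar a α (betaVarInv a α t) = t := by
  have h1t : 0 < 1 - t := by linarith
  rw [betaVar, betaVarInv, ← rpow_mul (by positivity), inv_mul_eq_div, neg_div, div_self hα,
    rpow_neg_one]
  field_simp
  ring

theorem image_betaVarInv_Ioo (ha : 0 < a) (hα : 0 < α) {r₀ : ℝ} (hr₀ : 0 < r₀) :
    betaVarInv a α '' Ioo (betaVar a α r₀) 1 = Ioi r₀ := by
  have hpos : ∀ t ∈ Ioo (betaVar a α r₀) 1, 0 < t := fun t ht =>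
    (betaVar_pos ha hr₀).trans ht.1
  ext r
  constructor
  · rintro ⟨t, ht, rfl⟩
    have hg := betaVarInv_pos (α := α) ha (hpos t ht) ht.2
    rw [mem_Ioi, ← (betaVar_strictMonoOn ha hα).lt_iff_lt hr₀ hg,
      betaVar_betaVarInv ha hα.ne' (hpos t ht) ht.2]
    exact ht.1
  · intro hr
    have hr0 : 0 < r := hr₀.trans hr
    exact ⟨betaVar a α r, ⟨betaVar_strictMonoOn ha hα hr₀ hr0 hr, betaVar_lt_one ha hr0⟩,
      betaVarInv_betaVar ha hα.ne' hr0⟩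

-- The logarithmic derivative of `betaVarInv a α` is `1 / (α t (1 - t))`.
theorem hasDerivAt_betaVarInv (ha : 0 < a) {t : ℝ} (ht₀ : 0 < t) (ht₁ : t < 1) :
    HasDerivAt (betaVarInv a α) (betaVarInv a α t / (α * t * (1 - t))) t := by
  have h1t : 0 < 1 - t := by linarith
  have hx : 0 < a * (t / (1 - t)) := by positivity
  have hinner : HasDerivAt (fun s => a * (s / (1 - s))) (a * (1 / (1 - t) ^ 2)) t := by
    refine (((hasDerivAt_id' t).div ((hasDerivAt_id' t).const_sub 1) h1t.ne').const_mul
      a).congr_deriv ?_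
    ring
  refine (hinner.rpow_const (p := α⁻¹) (Or.inl hx.ne')).congr_deriv ?_
  rw [rpow_sub_one hx.ne', betaVarInv]
  field_simp

theorem betaVarInv_div_mul_betaVarInv (ha : 0 < a) (hα : α ≠ 0) {t : ℝ} (ht₀ : 0 < t)
    (ht₁ : t < 1) :
    betaVarInv a α t / (α * t * (1 - t)) * betaVarInv a α t =
      a ^ (2 / α) / α * (t ^ (2 / α - 1) * (1 - t) ^ (-(2 / α) - 1)) := by
  have h1t : 0 < 1 - t := by linarith
  have hsq : betaVarInv a α t * betaVarInv a α t =
      a ^ (2 / α) * (t ^ (2 / α) * (1 - t) ^ (-(2 / α))) := by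
    rw [betaVarInv, ← rpow_add (by positivity), mul_rpow ha.le (by positivity),
      div_rpow ht₀.le h1t.le, rpow_neg h1t.le, show α⁻¹ + α⁻¹ = 2 / α by ring]
    ring
  rw [div_mul_eq_mul_div, hsq, rpow_sub_one ht₀.ne', rpow_sub_one h1t.ne']
  field_simp

end BetaSubstitution

theorem abs_deriv_smul_interference_integrand {a α : ℝ} (ha : 0 < a) (hα : 0 < α) (Ψ : ℕ)
    {t : ℝ} (ht₀ : 0 < t) (ht₁ : t < 1) :
    |betaVarInv a α t / (α * t * (1 - t))| •
        ((1 - ((1 + a * betaVarInv a α t ^ (-α)) ^ Ψ)⁻¹) * betaVarInv a α t) =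
      a ^ (2 / α) / α * ∑ i ∈ Finset.Icc 1 Ψ, (Ψ.choose i : ℝ) *
        (t ^ ((Ψ : ℝ) - i + 2 / α - 1) * (1 - t) ^ ((i : ℝ) - 2 / α - 1)) := by
  have h1t : 0 < 1 - t := by linarith
  have hderiv : 0 < betaVarInv a α t / (α * t * (1 - t)) := by
    have := betaVarInv_pos (α := α) ha ht₀ ht₁
    positivity
  rw [smul_eq_mul, abs_of_pos hderiv, ← inv_pow, ← betaVar,
    betaVar_betaVarInv ha hα.ne' ht₀ ht₁,
    ← one_sub_pow_mul_rpow_mul_rpow_eq_sum ht₀ ht₁, mul_left_comm (a ^ (2 / α) / α),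
    ← betaVarInv_div_mul_betaVarInv ha hα.ne' ht₀ ht₁]
  ring

theorem stmt_8_general (α : ℝ) (hα : 2 < α) (Ψ : ℕ) (a r₀ : ℝ)
    (ha : 0 < a) (hr₀ : 0 < r₀) (t₀ : ℝ) (ht₀ : t₀ = 1 / (1 + a * r₀ ^ (-α))) :
    IntegrableOn (fun r : ℝ => (1 - ((1 + a * r ^ (-α)) ^ Ψ)⁻¹) * r) (Set.Ioi r₀) ∧
    (∀ i ∈ Finset.Icc 1 Ψ,
      IntegrableOn
        (fun t : ℝ => t ^ ((Ψ : ℝ) - (i : ℝ) + 2 / α - 1) * (1 - t) ^ ((i : ℝ) - 2 / α - 1))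
        (Set.Ioo t₀ 1)) ∧
    (∫ r in Set.Ioi r₀, (1 - ((1 + a * r ^ (-α)) ^ Ψ)⁻¹) * r
      = (a ^ (2 / α) / α) * ∑ i ∈ Finset.Icc 1 Ψ, (Ψ.choose i : ℝ) *
          ∫ t in Set.Ioo t₀ 1,
            t ^ ((Ψ : ℝ) - (i : ℝ) + 2 / α - 1) * (1 - t) ^ ((i : ℝ) - 2 / α - 1)) := by
  have hα₀ : 0 < α := by linarith
  obtain rfl : t₀ = betaVar a α r₀ := by rw [ht₀, one_div, betaVar]
  have hpos : ∀ t ∈ Ioo (betaVar a α r₀) 1, 0 < t := fun t ht =>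
    (betaVar_pos ha hr₀).trans ht.1
  have hderiv : ∀ t ∈ Ioo (betaVar a α r₀) 1, HasDerivWithinAt (betaVarInv a α)
      (betaVarInv a α t / (α * t * (1 - t))) (Ioo (betaVar a α r₀) 1) t := fun t ht =>
    (hasDerivAt_betaVarInv ha (hpos t ht) ht.2).hasDerivWithinAt
  have hinj : InjOn (betaVarInv a α) (Ioo (betaVar a α r₀) 1) :=
    LeftInvOn.injOn fun t ht => betaVar_betaVarInv ha hα₀.ne' (hpos t ht) ht.2
  have hbeta : ∀ i ∈ Finset.Icc 1 Ψ, IntegrableOn (fun t : ℝ =>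
      t ^ ((Ψ : ℝ) - i + 2 / α - 1) * (1 - t) ^ ((i : ℝ) - 2 / α - 1))
      (Ioo (betaVar a α r₀) 1) := by
    intro i hi
    have hi : (1 : ℝ) ≤ i := by exact_mod_cast (Finset.mem_Icc.mp hi).1
    have hα' : 2 / α < 1 := (div_lt_one hα₀).mpr hα
    exact integrableOn_rpow_mul_one_sub_rpow_Ioo (betaVar_pos ha hr₀) (by linarith)
  have hsubst := fun t ht => abs_deriv_smul_interference_integrand ha hα₀ Ψ (hpos t ht) ht.2
  refine ⟨?_, hbeta, ?_⟩
  · rw [← image_betaVarInv_Ioo ha hα₀ hr₀,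
      integrableOn_image_iff_integrableOn_abs_deriv_smul measurableSet_Ioo hderiv hinj]
    refine IntegrableOn.congr_fun ?_ (fun t ht => (hsubst t ht).symm) measurableSet_Ioo
    exact (integrable_finsetSum _ fun i hi => (hbeta i hi).const_mul _).const_mul _
  · rw [← image_betaVarInv_Ioo ha hα₀ hr₀,
      integral_image_eq_integral_abs_deriv_smul measurableSet_Ioo hderiv hinj,
      setIntegral_congr_fun measurableSet_Ioo hsubst, integral_const_mul,
      integral_finsetSum _ fun i hi => (hbeta i hi).const_mul _]
    simp_rw [integral_const_mul]

/-- Central integral evaluation of Proposition 5 (Appendix F): the exponent of the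
interference Laplace transform as a sum of complementary incomplete Beta functions;
in particular all the integrals appearing are finite. -/
theorem stmt_8 (α : ℝ) (hα : 2 < α) (Ψ : ℕ) (hΨ : 1 ≤ Ψ) (a r₀ : ℝ)
    (ha : 0 < a) (hr₀ : 0 < r₀) (t₀ : ℝ) (ht₀ : t₀ = 1 / (1 + a * r₀ ^ (-α))) :
    IntegrableOn (fun r : ℝ => (1 - ((1 + a * r ^ (-α)) ^ Ψ)⁻¹) * r) (Set.Ioi r₀) ∧
    (∀ i ∈ Finset.Icc 1 Ψ,
      IntegrableOn
        (fun t : ℝ => t ^ ((Ψ : ℝ) - (i : ℝ) + 2 / α - 1) * (1 - t) ^ ((i : ℝ) - 2 / α - 1))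
        (Set.Ioo t₀ 1)) ∧
    (∫ r in Set.Ioi r₀, (1 - ((1 + a * r ^ (-α)) ^ Ψ)⁻¹) * r
      = (a ^ (2 / α) / α) * ∑ i ∈ Finset.Icc 1 Ψ, (Ψ.choose i : ℝ) *
          ∫ t in Set.Ioo t₀ 1,
            t ^ ((Ψ : ℝ) - (i : ℝ) + 2 / α - 1) * (1 - t) ^ ((i : ℝ) - 2 / α - 1)) :=
  stmt_8_general α hα Ψ a r₀ ha hr₀ t₀ ht₀
end

section
/- Let α > 2, let Ψ ≥ 1 be an integer, let p > 0 and w > 0 be real numbers, and let j ≥ 1 be an integer. Then the function g(s) = ∫_w^∞ ((1 + s p r^{−α})^{−Ψ} − 1) · r dr is j-times differentiable on (0, ∞), and for every s > 0 its j-th derivative equals g^{(j)}(s) = (−1)^j p^j · ((Ψ + j − 1)!/(Ψ − 1)!) · ∫_w^∞ r^{1 − jα} (1 + s p r^{−α})^{−Ψ − j} dr, the integral on the right-hand side being finite. -/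
open MeasureTheory Real Set Filter Topology
open scoped ContDiff

/-!
Differentiating `(1 + s b)⁻ⁿ` in `s` gives `-n b (1 + s b)⁻⁽ⁿ⁺¹⁾`, which is bounded by `n b` for
`s > 0`. With `b = p r^{-α}` the `k`-th derivative integrand is thus dominated by a multiple of
`r^{1-(k+1)α}`, integrable on `(w, ∞)` because `α > 2`; so differentiation under the integral sign
applies at every order. Each step multiplies by `-(Ψ + k) p`, and these factors accumulate to
`(-p)^j Ψ (Ψ + 1) ⋯ (Ψ + j - 1)`.
-/

theorem hasDerivAt_inv_one_add_mul_pow {𝕜 : Type*} [NontriviallyNormedField 𝕜] (n : ℕ) (b : 𝕜)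
    {s : 𝕜} (h : 1 + s * b ≠ 0) :
    HasDerivAt (fun s => ((1 + s * b) ^ n)⁻¹) (-n * b * ((1 + s * b) ^ (n + 1))⁻¹) s := by
  have hlin : HasDerivAt (fun s => 1 + s * b) b s := by
    simpa using ((hasDerivAt_id s).mul_const b).const_add 1
  refine ((hlin.pow n).inv (pow_ne_zero n h)).congr_deriv ?_
  rcases n with _ | m
  · simp
  · simp only [Pi.pow_apply, Nat.add_sub_cancel]
    field_simp
    ring

theorem one_sub_inv_one_add_pow_le (n : ℕ) {u : ℝ} (hu : 0 ≤ u) :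
    1 - ((1 + u) ^ n)⁻¹ ≤ n * u := by
  have hx : -2 ≤ (1 + u)⁻¹ - 1 := by
    have : 0 ≤ (1 + u)⁻¹ := by positivity
    linarith
  have hbern := one_add_mul_le_pow hx n
  have hxu : -u ≤ (1 + u)⁻¹ - 1 := by
    have hdiv : (1 + u)⁻¹ - 1 = -(u / (1 + u)) := by field_simp; ring
    rw [hdiv, neg_le_neg_iff]
    exact div_le_self hu (by linarith)
  rw [add_sub_cancel, inv_pow] at hbern
  nlinarith [mul_le_mul_of_nonneg_left hxu (Nat.cast_nonneg (α := ℝ) n)]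

section Iterate

variable {𝕜 F : Type*} [NontriviallyNormedField 𝕜] [NormedAddCommGroup F] [NormedSpace 𝕜 F]
  {U : Set 𝕜} {f : ℕ → 𝕜 → F} {c : ℕ → 𝕜}

theorem contDiffOn_of_forall_hasDerivAt_smul_succ (hU : IsOpen U)
    (hf : ∀ k, ∀ s ∈ U, HasDerivAt (f k) (c k • f (k + 1) s) s) (k : ℕ) :
    ContDiffOn 𝕜 ∞ (f k) U := by
  rw [contDiffOn_infty]
  intro n
  induction n generalizing k with
  | zero =>
    exact contDiffOn_zero.2 fun s hs => (hf k s hs).continuousAt.continuousWithinAt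
  | succ n ih =>
    rw [Nat.cast_add, Nat.cast_one, contDiffOn_succ_iff_deriv_of_isOpen hU]
    refine ⟨fun s hs => (hf k s hs).differentiableAt.differentiableWithinAt, by simp, ?_⟩
    exact ((ih (k + 1)).const_smul (c k)).congr fun s hs => (hf k s hs).deriv

theorem iteratedDeriv_eq_prod_smul_of_forall_hasDerivAt_smul_succ (hU : IsOpen U)
    (hf : ∀ k, ∀ s ∈ U, HasDerivAt (f k) (c k • f (k + 1) s) s) (n : ℕ) :
    ∀ s ∈ U, iteratedDeriv n (f 0) s = (∏ i ∈ Finset.range n, c i) • f n s := by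
  induction n with
  | zero => simp
  | succ n ih =>
    intro s hs
    have hnear : iteratedDeriv n (f 0) =ᶠ[𝓝 s] (∏ i ∈ Finset.range n, c i) • f n :=
      eventually_of_mem (hU.mem_nhds hs) ih
    rw [iteratedDeriv_succ, hnear.deriv_eq, ((hf n s hs).const_smul _).deriv,
      Finset.prod_range_succ, smul_smul]

end Iterate

theorem hasDerivAt_integral_mul_inv_one_add_mul_pow_sub {X : Type*} [MeasurableSpace X]
    {μ : Measure X} {A b : X → ℝ} (hA : Measurable A) (hb : Measurable b)
    (hpos : ∀ᵐ x ∂μ, 0 ≤ A x ∧ 0 ≤ b x) (n : ℕ) (c : ℝ) {s₀ : ℝ} (hs₀ : 0 < s₀)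
    (hint : Integrable (fun x => A x * (((1 + s₀ * b x) ^ n)⁻¹ - c)) μ)
    (hAb : Integrable (fun x => A x * b x) μ) :
    HasDerivAt (fun s => ∫ x, A x * (((1 + s * b x) ^ n)⁻¹ - c) ∂μ)
      (-n * ∫ x, A x * b x * ((1 + s₀ * b x) ^ (n + 1))⁻¹ ∂μ) s₀ := by
  rw [← integral_const_mul]
  refine (hasDerivAt_integral_of_dominated_loc_of_deriv_le (Ioi_mem_nhds hs₀)
    (F := fun s x => A x * (((1 + s * b x) ^ n)⁻¹ - c))
    (F' := fun s x => -n * (A x * b x * ((1 + s * b x) ^ (n + 1))⁻¹))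
    (bound := fun x => n * (A x * b x)) (Eventually.of_forall fun s => by fun_prop) hint
    (by fun_prop) ?_ (hAb.const_mul _) ?_).2
  · filter_upwards [hpos] with x ⟨hAx, hbx⟩ s hs
    have hge : 1 ≤ 1 + s * b x := by nlinarith [mem_Ioi.1 hs]
    have hle : ((1 + s * b x) ^ (n + 1))⁻¹ ≤ 1 := inv_le_one_of_one_le₀ (one_le_pow₀ hge)
    have hinv : 0 ≤ ((1 + s * b x) ^ (n + 1))⁻¹ := by positivity
    rw [norm_mul, norm_neg, Real.norm_natCast, Real.norm_of_nonneg (by positivity)]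
    exact mul_le_mul_of_nonneg_left (mul_le_of_le_one_right (by positivity) hle) n.cast_nonneg
  · filter_upwards [hpos] with x ⟨hAx, hbx⟩ s hs
    have hne : 1 + s * b x ≠ 0 := by nlinarith [mem_Ioi.1 hs]
    exact (((hasDerivAt_inv_one_add_mul_pow n (b x) hne).sub_const c).const_mul (A x)).congr_deriv
      (by ring)

section LaplaceExponent

variable {α p w : ℝ} {Ψ : ℕ}

/-- At `k = 0` the `s`-independent term `r` is subtracted so that the integral over `(w, ∞)`
converges; this does not affect derivatives in `s`. -/
noncomputable def laplaceExponentIntegrand (α p : ℝ) (Ψ k : ℕ) (s r : ℝ) : ℝ :=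
  r ^ (1 - k * α) * (((1 + s * (p * r ^ (-α))) ^ (Ψ + k))⁻¹ - if k = 0 then 1 else 0)

theorem laplaceExponentIntegrand_zero (s r : ℝ) :
    laplaceExponentIntegrand α p Ψ 0 s r = (((1 + s * p * r ^ (-α)) ^ Ψ)⁻¹ - 1) * r := by
  simp [laplaceExponentIntegrand, mul_assoc, mul_comm r]

theorem laplaceExponentIntegrand_of_ne_zero {k : ℕ} (hk : k ≠ 0) (s r : ℝ) :
    laplaceExponentIntegrand α p Ψ k s r =
      r ^ (1 - k * α) * ((1 + s * p * r ^ (-α)) ^ (Ψ + k))⁻¹ := by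
  simp [laplaceExponentIntegrand, hk, mul_assoc]

theorem integrableOn_rpow_one_sub_mul_Ioi (hα : 2 < α) (hw : 0 < w) {k : ℕ} (hk : k ≠ 0) :
    IntegrableOn (fun r : ℝ => r ^ (1 - k * α)) (Ioi w) := by
  refine integrableOn_Ioi_rpow_of_lt ?_ hw
  have : (1 : ℝ) ≤ k := by exact_mod_cast Nat.one_le_iff_ne_zero.2 hk
  nlinarith

theorem norm_laplaceExponentIntegrand_zero_le (hp : 0 ≤ p) {s r : ℝ} (hs : 0 ≤ s) (hr : 0 < r) :
    ‖laplaceExponentIntegrand α p Ψ 0 s r‖ ≤ Ψ * s * p * r ^ (1 - ((1 : ℕ) : ℝ) * α) := by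
  have hu : 0 ≤ s * (p * r ^ (-α)) := by positivity
  have hle : ((1 + s * (p * r ^ (-α))) ^ Ψ)⁻¹ ≤ 1 :=
    inv_le_one_of_one_le₀ (one_le_pow₀ (by linarith))
  have hrpow : r * r ^ (-α) = r ^ (1 - ((1 : ℕ) : ℝ) * α) := by
    rw [Nat.cast_one, one_mul, sub_eq_add_neg, rpow_add hr, rpow_one]
  simp only [laplaceExponentIntegrand, CharP.cast_eq_zero, zero_mul, sub_zero, rpow_one,
    add_zero, if_true]
  rw [norm_mul, norm_sub_rev, Real.norm_of_nonneg hr.le, Real.norm_of_nonneg (by linarith),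
    ← hrpow]
  calc r * (1 - ((1 + s * (p * r ^ (-α))) ^ Ψ)⁻¹) ≤ r * (Ψ * (s * (p * r ^ (-α)))) :=
        mul_le_mul_of_nonneg_left (one_sub_inv_one_add_pow_le Ψ hu) hr.le
    _ = Ψ * s * p * (r * r ^ (-α)) := by ring

theorem norm_laplaceExponentIntegrand_le (hp : 0 ≤ p) {k : ℕ} (hk : k ≠ 0) {s r : ℝ}
    (hs : 0 ≤ s) (hr : 0 < r) : ‖laplaceExponentIntegrand α p Ψ k s r‖ ≤ r ^ (1 - k * α) := by
  have hu : 0 ≤ s * (p * r ^ (-α)) := by positivity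
  have hle : ((1 + s * (p * r ^ (-α))) ^ (Ψ + k))⁻¹ ≤ 1 :=
    inv_le_one_of_one_le₀ (one_le_pow₀ (by linarith))
  have hinv : 0 ≤ ((1 + s * (p * r ^ (-α))) ^ (Ψ + k))⁻¹ := by positivity
  rw [laplaceExponentIntegrand, if_neg hk, sub_zero, norm_mul, norm_of_nonneg hinv,
    norm_of_nonneg (by positivity)]
  exact mul_le_of_le_one_right (by positivity) hle

theorem integrableOn_laplaceExponentIntegrand (hα : 2 < α) (hp : 0 ≤ p) (hw : 0 < w) {s : ℝ}
    (hs : 0 ≤ s) (k : ℕ) : IntegrableOn (laplaceExponentIntegrand α p Ψ k s) (Ioi w) := by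
  have hmeas :
      AEStronglyMeasurable (laplaceExponentIntegrand α p Ψ k s) (volume.restrict (Ioi w)) := by
    unfold laplaceExponentIntegrand; fun_prop
  rcases eq_or_ne k 0 with rfl | hk
  · refine ((integrableOn_rpow_one_sub_mul_Ioi hα hw one_ne_zero).const_mul (Ψ * s * p)).mono'
      hmeas ?_
    filter_upwards [ae_restrict_mem measurableSet_Ioi] with r hr
    exact norm_laplaceExponentIntegrand_zero_le hp hs (hw.trans hr)
  · refine (integrableOn_rpow_one_sub_mul_Ioi hα hw hk).mono' hmeas ?_
    filter_upwards [ae_restrict_mem measurableSet_Ioi] with r hr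
    exact norm_laplaceExponentIntegrand_le hp hk hs (hw.trans hr)

theorem hasDerivAt_integral_laplaceExponentIntegrand (hα : 2 < α) (hp : 0 ≤ p) (hw : 0 < w)
    (k : ℕ) {s₀ : ℝ} (hs₀ : 0 < s₀) :
    HasDerivAt (fun s => ∫ r in Ioi w, laplaceExponentIntegrand α p Ψ k s r)
      (-((Ψ + k : ℕ) * p) * ∫ r in Ioi w, laplaceExponentIntegrand α p Ψ (k + 1) s₀ r) s₀ := by
  have hpos : ∀ᵐ r ∂(volume.restrict (Ioi w)), 0 ≤ r ^ (1 - k * α) ∧ 0 ≤ p * r ^ (-α) := by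
    filter_upwards [ae_restrict_mem measurableSet_Ioi] with r hr
    have : 0 < r := hw.trans hr
    constructor <;> positivity
  have hrpow : ∀ r ∈ Ioi w, r ^ (1 - k * α) * (p * r ^ (-α)) = p * r ^ (1 - (k + 1 : ℕ) * α) := by
    intro r hr
    rw [mul_left_comm, ← rpow_add (hw.trans hr)]
    push_cast; ring_nf
  have hAb : IntegrableOn (fun r => r ^ (1 - k * α) * (p * r ^ (-α))) (Ioi w) :=
    IntegrableOn.congr_fun ((integrableOn_rpow_one_sub_mul_Ioi hα hw k.succ_ne_zero).const_mul p)
      (fun r hr => (hrpow r hr).symm) measurableSet_Ioi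
  have := hasDerivAt_integral_mul_inv_one_add_mul_pow_sub (by fun_prop) (by fun_prop) hpos (Ψ + k)
    (if k = 0 then 1 else 0) hs₀ (integrableOn_laplaceExponentIntegrand hα hp hw hs₀.le k) hAb
  refine this.congr_deriv ?_
  rw [← integral_const_mul, ← integral_const_mul]
  refine setIntegral_congr_fun measurableSet_Ioi fun r hr => ?_
  simp only [laplaceExponentIntegrand, Nat.succ_ne_zero, if_false, sub_zero, ← add_assoc]
  rw [← mul_assoc _ _ ((1 + s₀ * (p * r ^ (-α))) ^ (Ψ + k + 1))⁻¹, hrpow r hr]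
  ring

end LaplaceExponent

theorem prod_range_neg_natCast_add_mul {Ψ : ℕ} (hΨ : 1 ≤ Ψ) (p : ℝ) (j : ℕ) :
    ∏ i ∈ Finset.range j, -(((Ψ + i : ℕ) : ℝ) * p) =
      (-1) ^ j * p ^ j * ((Ψ + j - 1).factorial / (Ψ - 1).factorial : ℝ) := by
  calc ∏ i ∈ Finset.range j, -(((Ψ + i : ℕ) : ℝ) * p)
      = ∏ i ∈ Finset.range j, -p * ((Ψ + i : ℕ) : ℝ) := Finset.prod_congr rfl fun _ _ => by ring
    _ = (-p) ^ j * (Ψ.ascFactorial j : ℝ) := by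
      rw [Finset.prod_mul_distrib, Finset.prod_const, Finset.card_range,
        Nat.ascFactorial_eq_prod_range, Nat.cast_prod]
    _ = _ := by
      rw [← Nat.factorial_mul_ascFactorial' Ψ j hΨ, Nat.cast_mul, neg_pow, mul_div_cancel_left₀]
      positivity

/-- Differentiation under the integral sign (proof of Lemma 2, Appendix G): the j-th
derivative of the tier-wise exponent of the interference Laplace transform. -/
theorem stmt_9 (α : ℝ) (hα : 2 < α) (Ψ : ℕ) (hΨ : 1 ≤ Ψ) (p w : ℝ)
    (hp : 0 < p) (hw : 0 < w) (j : ℕ) (hj : 1 ≤ j) :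
    ContDiffOn ℝ (j : ℕ∞)
      (fun s : ℝ => ∫ r in Set.Ioi w, (((1 + s * p * r ^ (-α)) ^ Ψ)⁻¹ - 1) * r)
      (Set.Ioi 0) ∧
    ∀ s : ℝ, 0 < s →
      IntegrableOn
        (fun r : ℝ => r ^ (1 - (j : ℝ) * α) * ((1 + s * p * r ^ (-α)) ^ (Ψ + j))⁻¹)
        (Set.Ioi w) ∧
      iteratedDeriv j
          (fun s : ℝ => ∫ r in Set.Ioi w, (((1 + s * p * r ^ (-α)) ^ Ψ)⁻¹ - 1) * r) s
        = (-1 : ℝ) ^ j * p ^ j *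
            ((Nat.factorial (Ψ + j - 1) : ℝ) / (Nat.factorial (Ψ - 1) : ℝ)) *
            ∫ r in Set.Ioi w, r ^ (1 - (j : ℝ) * α) * ((1 + s * p * r ^ (-α)) ^ (Ψ + j))⁻¹ := by
  have hj₀ : j ≠ 0 := Nat.one_le_iff_ne_zero.1 hj
  have hderiv (k : ℕ) (s : ℝ) (hs : s ∈ Ioi 0) := hasDerivAt_integral_laplaceExponentIntegrand
    (Ψ := Ψ) hα hp.le hw k hs
  have hzero : (fun s : ℝ => ∫ r in Ioi w, (((1 + s * p * r ^ (-α)) ^ Ψ)⁻¹ - 1) * r) =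
      fun s => ∫ r in Ioi w, laplaceExponentIntegrand α p Ψ 0 s r := by
    simp only [laplaceExponentIntegrand_zero]
  have hlast (s : ℝ) : laplaceExponentIntegrand α p Ψ j s =
      fun r => r ^ (1 - (j : ℝ) * α) * ((1 + s * p * r ^ (-α)) ^ (Ψ + j))⁻¹ :=
    funext (laplaceExponentIntegrand_of_ne_zero hj₀ s)
  refine ⟨?_, fun s hs => ⟨?_, ?_⟩⟩
  · rw [hzero]
    exact (contDiffOn_of_forall_hasDerivAt_smul_succ isOpen_Ioi hderiv 0).of_le
      (by exact_mod_cast le_top)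
  · rw [← hlast]
    exact integrableOn_laplaceExponentIntegrand hα hp.le hw hs.le j
  · rw [hzero, iteratedDeriv_eq_prod_smul_of_forall_hasDerivAt_smul_succ isOpen_Ioi hderiv j s hs,
      smul_eq_mul, prod_range_neg_natCast_add_mul hΨ, hlast]
end
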